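/- arXiv:2112.10120 — 3 statements merged into one kernel-verified Lean document; each statement's English description precedes it below -/
import Mathlib

section
/- If a group Γ acts by isometries on a metric space X in which every ball of finite radius is finite (X is locally finite), then the stabilizer of any point is an almost normal subgroup of Γ. -/
open Pointwise

/-! The stabilizer `Λ` of `x₀` conjugated by `γ` is the stabilizer of `γ • x₀`, so
`[Λ : Λ ∩ γΛγ⁻¹]` is the size of the `Λ`-orbit of `γ • x₀`. Since `Λ` acts by isometries
fixing `x₀`, that orbit lies in the sphere of radius `dist (γ • x₀) x₀` about `x₀`,
which is finite by local finiteness. -/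

namespace MulAction

variable {G X : Type*} [Group G] [MulAction G X]

theorem conj_smul_stabilizer (g : G) (x : X) :
    MulAut.conj g • stabilizer G x = stabilizer G (g • x) := by
  rw [stabilizer_smul_eq_stabilizer_map_conj, Subgroup.pointwise_smul_def]
  rfl

theorem relIndex_stabilizer_eq_ncard_orbit (H : Subgroup G) (y : X) :
    (stabilizer G y).relIndex H = (orbit H y).ncard := by
  rw [Subgroup.relIndex, ← index_stabilizer]
  rfl

theorem relIndex_stabilizer_ne_zero {H : Subgroup G} {y : X} (hy : (orbit H y).Finite) :
    (stabilizer G y).relIndex H ≠ 0 := by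
  rw [relIndex_stabilizer_eq_ncard_orbit]
  exact (Set.ncard_pos hy).mpr ⟨y, mem_orbit_self y⟩ |>.ne'

end MulAction

theorem orbit_stabilizer_subset_sphere_of_isometry {G X : Type*} [Group G] [PseudoMetricSpace X]
    [MulAction G X] (h_iso : ∀ g : G, Isometry (fun x : X => g • x)) (x₀ y : X) :
    MulAction.orbit (MulAction.stabilizer G x₀) y ⊆ Metric.sphere x₀ (dist y x₀) := by
  rintro _ ⟨⟨g, hg⟩, rfl⟩
  change dist (g • y) x₀ = dist y x₀
  conv_lhs => rw [← MulAction.mem_stabilizer_iff.mp hg]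
  exact (h_iso g).dist_eq y x₀

/-- If a group acts by isometries on a locally finite metric space, then any point
stabilizer is an almost normal subgroup. -/
theorem stabilizer_almostNormal_of_isometric_action {Γ X : Type*} [Group Γ]
    [MetricSpace X] [MulAction Γ X]
    (h_iso : ∀ γ : Γ, Isometry (fun x : X => γ • x))
    (h_fin : ∀ (x : X) (r : ℝ), (Metric.closedBall x r).Finite)
    (x₀ : X) :
    ∀ γ : Γ, (MulAut.conj γ • MulAction.stabilizer Γ x₀).relIndex
      (MulAction.stabilizer Γ x₀) ≠ 0 := by
  intro γ
  rw [MulAction.conj_smul_stabilizer]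
  apply MulAction.relIndex_stabilizer_ne_zero
  exact (h_fin x₀ _).subset <|
    (orbit_stabilizer_subset_sphere_of_isometry h_iso x₀ _).trans Metric.sphere_subset_closedBall
end

section
/- SL(2, ℤ) is an almost normal subgroup of SL(2, ℤ[1/p]) for any prime p. -/
/-!
If `a • γ` and `b • γ⁻¹` have entries in `R`, then for `g ≡ 1 (mod b a)`, writing
`g = 1 + b a X`, the conjugate `γ⁻¹ g γ = 1 + (b γ⁻¹) X (a γ)` again has entries in `R`,
and its determinant is `1` because `R` embeds in its localization.
Over `ℤ[1/p]` such `a` and `b` are powers of `p`, so `γ⁻¹ SL(2, ℤ) γ ∩ SL(2, ℤ)` contains the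
principal congruence subgroup of level `p ^ k` for some `k`, which has finite index.
-/

open Pointwise MatrixGroups

theorem IsLocalization.exists_matrix_map_eq_smul {n R S : Type*} [Finite n] [CommRing R]
    [CommRing S] [Algebra R S] (M : Submonoid R) [IsLocalization M S] (P : Matrix n n S) :
    ∃ a ∈ M, ∃ A : Matrix n n R, A.map (algebraMap R S) = algebraMap R S a • P := by
  obtain ⟨⟨a, ha⟩, hint⟩ := exist_integer_multiples_of_finite M fun ij : n × n ↦ P ij.1 ij.2
  choose A hA using hint
  refine ⟨a, ha, Matrix.of fun i j ↦ A (i, j), ?_⟩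
  ext i j
  simpa [Algebra.smul_def] using hA (i, j)

variable {n R S : Type*} [Fintype n] [DecidableEq n] [CommRing R] [CommRing S]

theorem Matrix.map_one_add_mul_mul (f : R →+* S) {A B X : Matrix n n R} {a b : R}
    {P Q : Matrix n n S} (hQP : Q * P = 1) (hA : A.map f = f a • P) (hB : B.map f = f b • Q) :
    (1 + B * X * A).map f = Q * (1 + (b * a) • X).map f * P := by
  rw [Matrix.map_add _ f.map_add, Matrix.map_one f f.map_zero f.map_one, Matrix.map_mul,
    Matrix.map_mul, hA, hB, Matrix.map_add _ f.map_add, Matrix.map_one f f.map_zero f.map_one,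
    Matrix.map_smul' _ _ _ (map_mul f), Matrix.mul_add, Matrix.add_mul, Matrix.mul_one, hQP]
  simp only [Matrix.smul_mul, Matrix.mul_smul, smul_smul, map_mul, mul_comm (f a)]

namespace Matrix.SpecialLinearGroup

theorem inv_mul_map_mul_mem_range {f : R →+* S} (hf : Function.Injective f)
    (γ : SpecialLinearGroup n S) {a b : R} {A B : Matrix n n R}
    (hA : A.map f = f a • (γ : Matrix n n S))
    (hB : B.map f = f b • ((γ⁻¹ : SpecialLinearGroup n S) : Matrix n n S))
    (g : SpecialLinearGroup n R) {X : Matrix n n R} (hg : (g : Matrix n n R) = 1 + (b * a) • X) :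
    γ⁻¹ * map f g * γ ∈ (map f).range := by
  have hC := Matrix.map_one_add_mul_mul f (X := X)
    (congrArg Subtype.val (inv_mul_cancel γ)) hA hB
  rw [← hg] at hC
  have hdet : (1 + B * X * A).det = 1 := hf <| by
    rw [RingHom.map_det, RingHom.mapMatrix_apply, hC, Matrix.det_mul, Matrix.det_mul, det_coe,
      det_coe, ← RingHom.mapMatrix_apply, ← RingHom.map_det, det_coe, map_one, mul_one, mul_one]
  exact ⟨⟨_, hdet⟩, Subtype.ext hC⟩

theorem exists_forall_dvd_map_mem_conj_smul_range [Algebra R S] (M : Submonoid R)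
    [IsLocalization M S] (hM : M ≤ nonZeroDivisors R) (γ : SpecialLinearGroup n S) :
    ∃ m ∈ M, ∀ g : SpecialLinearGroup n R, (∀ i j, m ∣ ((g : Matrix n n R) - 1) i j) →
      map (algebraMap R S) g ∈ MulAut.conj γ • (map (algebraMap R S)).range := by
  obtain ⟨a, ha, A, hA⟩ := IsLocalization.exists_matrix_map_eq_smul M (γ : Matrix n n S)
  obtain ⟨b, hb, B, hB⟩ :=
    IsLocalization.exists_matrix_map_eq_smul M ((γ⁻¹ : SpecialLinearGroup n S) : Matrix n n S)
  refine ⟨b * a, M.mul_mem hb ha, fun g hg ↦ ?_⟩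
  choose X hX using hg
  have hgX : (g : Matrix n n R) = 1 + (b * a) • Matrix.of X := by
    ext i j
    simp [← hX i j]
  rw [Subgroup.mem_pointwise_smul_iff_inv_smul_mem, ← map_inv, MulAut.smul_def,
    MulAut.conj_apply, inv_inv]
  exact inv_mul_map_mul_mem_range (IsLocalization.injective S hM) γ hA hB g hgX

end Matrix.SpecialLinearGroup

theorem CongruenceSubgroup.dvd_sub_one_of_mem_Gamma {N : ℕ} {g : SL(2, ℤ)}
    (hg : g ∈ CongruenceSubgroup.Gamma N) (i j : Fin 2) :
    (N : ℤ) ∣ ((g : Matrix (Fin 2) (Fin 2) ℤ) - 1) i j := by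
  have hij := congrArg (fun h : SL(2, ZMod N) ↦ (h : Matrix (Fin 2) (Fin 2) (ZMod N)) i j)
    (CongruenceSubgroup.Gamma_mem'.mp hg)
  rw [← ZMod.intCast_zmod_eq_zero_iff_dvd, Matrix.sub_apply, Int.cast_sub]
  simp only [Matrix.SpecialLinearGroup.map_apply_coe, RingHom.mapMatrix_apply, Matrix.map_apply,
    Int.coe_castRingHom, Matrix.SpecialLinearGroup.coe_one] at hij
  rw [hij, sub_eq_zero]
  by_cases h : i = j <;> simp [h, Matrix.one_apply]

/-- `SL(2, ℤ)` (embedded as the matrices with integer entries) is an almost normal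
subgroup of `SL(2, ℤ[1/p])`, for any prime `p`. -/
theorem SL2Z_almostNormal_in_SL2ZpInv (p : ℕ) (hp : p.Prime) :
    ∀ γ : Matrix.SpecialLinearGroup (Fin 2) (Localization.Away (p : ℤ)),
      ((MulAut.conj γ •
          (Matrix.SpecialLinearGroup.map (n := Fin 2)
            (algebraMap ℤ (Localization.Away (p : ℤ)))).range)).relIndex
        (Matrix.SpecialLinearGroup.map (n := Fin 2)
          (algebraMap ℤ (Localization.Away (p : ℤ)))).range ≠ 0 := by
  intro γ
  have hp0 : (p : ℤ) ≠ 0 := by exact_mod_cast hp.ne_zero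
  obtain ⟨_, ⟨k, rfl⟩, hconj⟩ :=
    Matrix.SpecialLinearGroup.exists_forall_dvd_map_mem_conj_smul_range _
      (powers_le_nonZeroDivisors_of_noZeroDivisors hp0) γ
  have : NeZero (p ^ k) := ⟨pow_ne_zero k hp.ne_zero⟩
  rw [← Subgroup.index_comap]
  refine (Subgroup.finiteIndex_of_le (H := CongruenceSubgroup.Gamma (p ^ k))
    fun g hg ↦ ?_).index_ne_zero
  exact hconj g fun i j ↦ by exact_mod_cast CongruenceSubgroup.dvd_sub_one_of_mem_Gamma hg i j
end

section
/- Let H, K be subgroups of a group Γ with H ≤ K and [K : H] < ∞. If H is almost normal in Γ, then K is almost normal in Γ. -/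
open Pointwise

/-- If `H ≤ K ≤ Γ` with `H` of finite index in `K`, and `H` is almost normal in `Γ`,
then `K` is almost normal in `Γ`. -/
theorem almostNormal_of_finiteIndex_over {Γ : Type*} [Group Γ] (H K : Subgroup Γ)
    (hHK : H ≤ K) (hfin : H.relIndex K ≠ 0)
    (hH : ∀ γ : Γ, (MulAut.conj γ • H).relIndex H ≠ 0) :
    ∀ γ : Γ, (MulAut.conj γ • K).relIndex K ≠ 0 := by
  intro γ
  have hγH : (MulAut.conj γ • H).relIndex K ≠ 0 := Subgroup.relIndex_ne_zero_trans (hH γ) hfin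
  have hle : MulAut.conj γ • H ≤ MulAut.conj γ • K :=
    Subgroup.pointwise_smul_le_pointwise_smul_iff.mpr hHK
  exact mt (Subgroup.relIndex_eq_zero_of_le_left hle) hγH
end
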